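/- Let λ = √2 + 1 and define, for n ∈ ℤ and (s,t) ∈ ℂ², ω_n(s,t) = √2(s+t) + n + (s−t) + (√2−1)/2 and θ_n(s,t) = (√2(s+t)+n)² − (s−t)² + 1/4. Then the Bäcklund transformation relations from {ω_n} to {θ_n} hold identically on ℂ²: for every n, (∂_s ω_n)θ_n − ω_n(∂_s θ_n) = λ^{-1}(ω_{n+1}θ_{n-1} − ω_n θ_n) and (∂_t ω_{n+1})θ_n − ω_{n+1}(∂_t θ_n) = −λ(ω_n θ_{n+1} − ω_{n+1} θ_n). -/
import Mathlib


noncomputable section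

/-- Partial derivative with respect to the first complex variable. -/
def ds (f : ℂ → ℂ → ℂ) (s t : ℂ) : ℂ := deriv (fun s' => f s' t) s

/-- Partial derivative with respect to the second complex variable. -/
def dt (f : ℂ → ℂ → ℂ) (s t : ℂ) : ℂ := deriv (fun t' => f s t') t

/-- The Bäcklund parameter λ = √2 + 1. -/
def lam : ℂ := ((Real.sqrt 2 + 1 : ℝ) : ℂ)

/-- The τ-function ω_n. -/
def om (n : ℤ) (s t : ℂ) : ℂ :=
  (Real.sqrt 2 : ℂ) * (s + t) + (n : ℂ) + (s - t) + ((Real.sqrt 2 : ℂ) - 1)/2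

/-- The τ-function θ_n. -/
def th (n : ℤ) (s t : ℂ) : ℂ :=
  ((Real.sqrt 2 : ℂ) * (s + t) + (n : ℂ))^2 - (s - t)^2 + 1/4

lemma deriv_lin (a c x : ℂ) : deriv (fun x' : ℂ => a * x' + c) x = a := by
  have h : HasDerivAt (fun x' : ℂ => a * x' + c) (a * 1) x :=
    ((hasDerivAt_id x).const_mul a).add_const c
  simpa using h.deriv

lemma deriv_quad (a b c x : ℂ) :
    deriv (fun x' : ℂ => a * x' ^ 2 + b * x' + c) x = 2 * a * x + b := by
  have h : HasDerivAt (fun x' : ℂ => a * x' ^ 2 + b * x' + c)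
      (a * ((2 : ℕ) * x ^ (2 - 1)) + b * 1) x :=
    (((hasDerivAt_pow 2 x).const_mul a).add ((hasDerivAt_id x).const_mul b)).add_const c
  rw [h.deriv]; push_cast; ring

/-- The Bäcklund transformation relations from ω to θ. -/
theorem backlund_omega_to_theta :
    ∀ (n : ℤ) (s t : ℂ),
      (ds (om n) s t * th n s t - om n s t * ds (th n) s t
        = lam⁻¹ * (om (n+1) s t * th (n-1) s t - om n s t * th n s t)) ∧
      (dt (om (n+1)) s t * th n s t - om (n+1) s t * dt (th n) s t
        = -lam * (om n s t * th (n+1) s t - om (n+1) s t * th n s t)) := by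
  intro n s t
  set r : ℂ := (Real.sqrt 2 : ℂ) with hrdef
  have hr2 : r ^ 2 = 2 := by
    rw [hrdef, ← Complex.ofReal_pow, Real.sq_sqrt (by norm_num : (2:ℝ) ≥ 0)]
    norm_num
  have hr3 : r ^ 3 = 2 * r := by
    calc r ^ 3 = r ^ 2 * r := by ring
    _ = 2 * r := by rw [hr2]
  have hlam : lam = r + 1 := by simp [lam, hrdef]
  have hlaminv : lam⁻¹ = r - 1 := by
    refine inv_eq_of_mul_eq_one_right ?_
    rw [hlam]; linear_combination hr2
  have h1 : ds (om n) s t = r + 1 := by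
    have he : (fun s' => om n s' t) =
        fun s' => (r + 1) * s' + (r * t + (n : ℂ) - t + (r - 1) / 2) := by
      funext s'; simp only [om, hrdef]; ring
    rw [ds, he, deriv_lin]
  have h2 : ds (th n) s t = 2 * (r ^ 2 - 1) * s + (2 * r * (r * t + (n : ℂ)) + 2 * t) := by
    have he : (fun s' => th n s' t) =
        fun s' => (r ^ 2 - 1) * s' ^ 2 + (2 * r * (r * t + (n : ℂ)) + 2 * t) * s'
          + ((r * t + (n : ℂ)) ^ 2 - t ^ 2 + 1 / 4) := by
      funext s'; simp only [th, hrdef]; ring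
    rw [ds, he, deriv_quad]
  have h3 : dt (om (n + 1)) s t = r - 1 := by
    have he : (fun t' => om (n + 1) s t') =
        fun t' => (r - 1) * t' + (r * s + ((n : ℂ) + 1) + s + (r - 1) / 2) := by
      funext t'; simp only [om, hrdef]; push_cast; ring
    rw [dt, he, deriv_lin]
  have h4 : dt (th n) s t = 2 * (r ^ 2 - 1) * t + (2 * r * (r * s + (n : ℂ)) + 2 * s) := by
    have he : (fun t' => th n s t') =
        fun t' => (r ^ 2 - 1) * t' ^ 2 + (2 * r * (r * s + (n : ℂ)) + 2 * s) * t'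
          + ((r * s + (n : ℂ)) ^ 2 - s ^ 2 + 1 / 4) := by
      funext t'; simp only [th, hrdef]; ring
    rw [dt, he, deriv_quad]
  constructor
  · rw [h1, h2, hlaminv]
    simp only [om, th, hrdef.symm]
    push_cast
    linear_combination (r * s - r * t + (n : ℂ) * r + r / 2 - 1 / 2) * hr2
      + (-1 / 2 - s + t - (n : ℂ)) * hr3
  · rw [h3, h4, hlam]
    simp only [om, th, hrdef.symm]
    push_cast
    linear_combination (-(r * s) + r * t + (n : ℂ) * r + r / 2 + 1 / 2) * hr2
      + (-1 / 2 + s - t - (n : ℂ)) * hr3
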